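/- Let V ⊂ ℂⁿ be isotropic for the signature-(p,q) form, let v ∈ V and w ∉ V^⊥ with ⟨v,w⟩ purely imaginary. Then there exists a linear map N : ℂⁿ → ℂⁿ with N* = -N, N² = 0, rank N ≤ 2, N(V^⊥) = 0, im N ⊂ V, and N(w) = v. -/

import Mathlib

/-!
Pick `u ∈ V` with `c = ⟨u, w⟩ ≠ 0` and write `M(a, b)` for the map `x ↦ ⟨a, x⟩ b`, whose
adjoint is `M(b, a)`. Then `N = c⁻¹ M(u, v) - c̄⁻¹ M(v, u) + β M(u, u)` with
`β = ⟨v, w⟩ / |c|²` sends `w` to `v`, and it is skew-adjoint because `β` is purely imaginary.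
Its image lies in `span {u, v} ⊆ V` and it kills `V^⊥ ⊇ V` (isotropy), so `N² = 0`.
-/

open Matrix

/-- The matrix `s = diag(-I_p, I_q)` defining the signature-`(p,q)` Hermitian form on `ℂⁿ`. -/
noncomputable def sig (p n : ℕ) : Matrix (Fin n) (Fin n) ℂ :=
  Matrix.diagonal fun i => if (i : ℕ) < p then -1 else 1

/-- The Hermitian form `⟨v,w⟩ = -∑_{i<p} v̄ᵢwᵢ + ∑_{i≥p} v̄ᵢwᵢ = v̄ᵗ s w`. -/
noncomputable def pqform (p n : ℕ) (v w : Fin n → ℂ) : ℂ :=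
  star v ⬝ᵥ (sig p n *ᵥ w)

/-- The adjoint `A* = s Āᵗ s` with respect to the signature-`(p,q)` form. -/
noncomputable def pqadj (p n : ℕ) (A : Matrix (Fin n) (Fin n) ℂ) : Matrix (Fin n) (Fin n) ℂ :=
  sig p n * Aᴴ * sig p n

lemma Matrix.rank_le_two_of_mulVec_mem_span {K m n : Type*} [Field K] [Fintype m] [Fintype n]
    {A : Matrix m n K} {a b : m → K} (h : ∀ x, A *ᵥ x ∈ Submodule.span K {a, b}) :
    A.rank ≤ 2 := by
  have hrange : LinearMap.range A.mulVecLin ≤ Submodule.span K {a, b} := by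
    rintro _ ⟨x, rfl⟩
    exact h x
  have hpair := finrank_range_le_card (R := K) ![a, b]
  rw [range_cons_cons_empty, Fintype.card_fin] at hpair
  exact (Submodule.finrank_mono hrange).trans hpair

lemma Matrix.mul_self_eq_zero_of_mulVec_mem {R n : Type*} [CommSemiring R] [Fintype n]
    {A : Matrix n n R} {V : Submodule R (n → R)} (hrange : ∀ x, A *ᵥ x ∈ V)
    (hker : ∀ x ∈ V, A *ᵥ x = 0) : A * A = 0 := by
  rw [ext_iff_mulVec]
  intro x
  rw [← mulVec_mulVec, hker _ (hrange x), zero_mulVec]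

section

variable {p n : ℕ}

lemma sig_mul_sig : sig p n * sig p n = 1 := by
  rw [sig, diagonal_mul_diagonal, ← diagonal_one]
  congr 1; ext i; split_ifs <;> norm_num

lemma sig_transpose : (sig p n)ᵀ = sig p n := diagonal_transpose _

lemma sig_conjTranspose : (sig p n)ᴴ = sig p n := by
  rw [sig, diagonal_conjTranspose]; congr 1; ext i; simp only [Pi.star_apply]; split_ifs <;> simp

lemma star_sig_mulVec (x : Fin n → ℂ) : star (sig p n *ᵥ x) = sig p n *ᵥ star x := by
  rw [star_mulVec, sig_conjTranspose, ← mulVec_transpose, sig_transpose]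

lemma pqform_eq_dotProduct (a x : Fin n → ℂ) : pqform p n a x = (sig p n *ᵥ star a) ⬝ᵥ x := by
  rw [pqform, dotProduct_mulVec, ← mulVec_transpose, sig_transpose]

lemma pqadj_add (A B : Matrix (Fin n) (Fin n) ℂ) :
    pqadj p n (A + B) = pqadj p n A + pqadj p n B := by
  simp only [pqadj, conjTranspose_add, Matrix.mul_add, Matrix.add_mul]

lemma pqadj_sub (A B : Matrix (Fin n) (Fin n) ℂ) :
    pqadj p n (A - B) = pqadj p n A - pqadj p n B := by
  simp only [pqadj, conjTranspose_sub, Matrix.mul_sub, Matrix.sub_mul]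

lemma pqadj_smul (c : ℂ) (A : Matrix (Fin n) (Fin n) ℂ) :
    pqadj p n (c • A) = star c • pqadj p n A := by
  simp only [pqadj, conjTranspose_smul, Matrix.mul_smul, Matrix.smul_mul]

noncomputable def pqRankOne (p n : ℕ) (a b : Fin n → ℂ) : Matrix (Fin n) (Fin n) ℂ :=
  vecMulVec b (sig p n *ᵥ star a)

lemma pqRankOne_mulVec (a b x : Fin n → ℂ) :
    pqRankOne p n a b *ᵥ x = pqform p n a x • b := by
  rw [pqRankOne, vecMulVec_mulVec, pqform_eq_dotProduct, op_smul_eq_smul]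

lemma pqadj_pqRankOne (a b : Fin n → ℂ) : pqadj p n (pqRankOne p n a b) = pqRankOne p n b a := by
  rw [pqadj, pqRankOne, conjTranspose_vecMulVec, mul_vecMulVec, vecMulVec_mul, star_sig_mulVec,
    star_star, mulVec_mulVec, sig_mul_sig, one_mulVec, ← mulVec_transpose, sig_transpose,
    pqRankOne]

noncomputable def pqSkew (p n : ℕ) (α β : ℂ) (a b : Fin n → ℂ) : Matrix (Fin n) (Fin n) ℂ :=
  α • pqRankOne p n a b - star α • pqRankOne p n b a + β • pqRankOne p n a a

lemma pqadj_pqSkew {α β : ℂ} (hβ : star β = -β) (a b : Fin n → ℂ) :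
    pqadj p n (pqSkew p n α β a b) = -pqSkew p n α β a b := by
  rw [pqSkew, pqadj_add, pqadj_sub, pqadj_smul, pqadj_smul, pqadj_smul, pqadj_pqRankOne,
    pqadj_pqRankOne, pqadj_pqRankOne, star_star, hβ, neg_smul]
  abel

lemma pqSkew_mulVec (α β : ℂ) (a b x : Fin n → ℂ) :
    pqSkew p n α β a b *ᵥ x =
      (α * pqform p n a x) • b + (β * pqform p n a x - star α * pqform p n b x) • a := by
  simp only [pqSkew, add_mulVec, sub_mulVec, smul_mulVec, pqRankOne_mulVec, smul_smul, sub_smul]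
  abel

end

theorem stmt_18_general (p n : ℕ)
    (V : Submodule ℂ (Fin n → ℂ))
    (hiso : ∀ x ∈ V, ∀ y ∈ V, pqform p n x y = 0)
    (v w : Fin n → ℂ) (hv : v ∈ V)
    (hw : ¬ (∀ y ∈ V, pqform p n y w = 0))
    (hvw : (pqform p n v w).re = 0) :
    ∃ N : Matrix (Fin n) (Fin n) ℂ,
      pqadj p n N = -N ∧ N * N = 0 ∧ N.rank ≤ 2 ∧
      (∀ x : Fin n → ℂ, (∀ y ∈ V, pqform p n y x = 0) → N *ᵥ x = 0) ∧
      (∀ x : Fin n → ℂ, N *ᵥ x ∈ V) ∧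
      N *ᵥ w = v := by
  push Not at hw
  obtain ⟨u, hu, hc⟩ := hw
  set c := pqform p n u w
  set d := pqform p n v w
  set β : ℂ := d / (Complex.normSq c : ℂ)
  have hβ : star β = -β := by
    have hd : star d = -d := Complex.ext (by simp [hvw]) (by simp)
    rw [star_div₀, hd, Complex.star_def, Complex.conj_ofReal, neg_div]
  set N := pqSkew p n c⁻¹ β u v
  have hN := pqSkew_mulVec (p := p) c⁻¹ β u v
  have hrange : ∀ x, N *ᵥ x ∈ V := fun x => by
    rw [hN]; exact V.add_mem (V.smul_mem _ hv) (V.smul_mem _ hu)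
  have hker : ∀ x, (∀ y ∈ V, pqform p n y x = 0) → N *ᵥ x = 0 := fun x hx => by
    rw [hN, hx u hu, hx v hv]; simp
  refine ⟨N, pqadj_pqSkew hβ u v,
    mul_self_eq_zero_of_mulVec_mem hrange fun x hx => hker x fun y hy => hiso y hy x hx,
    rank_le_two_of_mulVec_mem_span (a := v) (b := u) fun x => ?_, hker, hrange, ?_⟩
  · rw [hN]
    exact Submodule.mem_span_pair.mpr ⟨_, _, rfl⟩
  · have hβc : β * c - star c⁻¹ * d = 0 := by
      rw [show β = d / (c * starRingEnd ℂ c) by rw [Complex.mul_conj], star_inv₀, Complex.star_def]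
      have : (starRingEnd ℂ) c ≠ 0 := (map_ne_zero _).mpr hc
      field_simp
      ring
    rw [hN, inv_mul_cancel₀ hc, hβc, one_smul, zero_smul, add_zero]

theorem stmt_18 (p q n : ℕ) (hn : n = p + q)
    (V : Submodule ℂ (Fin n → ℂ))
    (hiso : ∀ x ∈ V, ∀ y ∈ V, pqform p n x y = 0)
    (v w : Fin n → ℂ) (hv : v ∈ V)
    (hw : ¬ (∀ y ∈ V, pqform p n y w = 0))
    (hvw : (pqform p n v w).re = 0) :
    ∃ N : Matrix (Fin n) (Fin n) ℂ,
      pqadj p n N = -N ∧ N * N = 0 ∧ N.rank ≤ 2 ∧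
      (∀ x : Fin n → ℂ, (∀ y ∈ V, pqform p n y x = 0) → N *ᵥ x = 0) ∧
      (∀ x : Fin n → ℂ, N *ᵥ x ∈ V) ∧
      N *ᵥ w = v :=
  stmt_18_general p n V hiso v w hv hw hvw
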